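/- Let u_x, u_y be real numbers, let (u_ij) (i,j ∈ {1,2}) be a symmetric family of reals with u₁₁·u₂₂ − u₁₂² < 0, and let (u_ijk) be a totally symmetric family of reals. For ξ ∈ ℝ³ with A(ξ) := ξ³ − ξ¹·u_x − ξ²·u_y ≠ 0, define B := 1/A(ξ), h^ξ_ij := B·u_ij, λ^ξ_k := ξ¹·u_{1k} + ξ²·u_{2k}, and C^ξ_{kij} := B·u_{ijk} + B²·(λ^ξ_j·u_{ki} + λ^ξ_i·u_{kj} + λ^ξ_k·u_{ij}). Consider the condition P(ξ): there exist a nonzero pair (θ₁, θ₂) ∈ ℝ² with u₂₂·θ₁² − 2·u₁₂·θ₁·θ₂ + u₁₁·θ₂² = 0 (i.e. θ is null for the inverse of h^ξ), reals α₁, α₂, and a symmetric family (β_ij), such that 3·C^ξ_{kij} = (α_k·h^ξ_ij + α_i·h^ξ_kj + α_j·h^ξ_ki) + (β_ij·θ_k + β_ik·θ_j + β_jk·θ_i) for all i, j, k ∈ {1,2}. Then for any two vectors ξ, ξ' with A(ξ) ≠ 0 and A(ξ') ≠ 0, P(ξ) holds if and only if P(ξ') holds; i.e. in the indefinite case the condition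 C^ξ = α ⊙ h^ξ + β ⊙ θ is independent of the choice of the transversal field ξ. -/

import Mathlib

noncomputable section

/-- Coordinate expression of the affine second fundamental form `h^ξ`
associated with the transversal field `ξ`. -/
def hCoef (ux uy : ℝ) (u2 : Fin 2 → Fin 2 → ℝ) (ξ : Fin 3 → ℝ) (i j : Fin 2) : ℝ :=
  (1 / (ξ 2 - ξ 0 * ux - ξ 1 * uy)) * u2 i j

/-- Coordinate expression `C^ξ_{kij}` of the cubic form associated with the
transversal field `ξ`. -/
def cCoef (ux uy : ℝ) (u2 : Fin 2 → Fin 2 → ℝ) (u3 : Fin 2 → Fin 2 → Fin 2 → ℝ)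
    (ξ : Fin 3 → ℝ) (k i j : Fin 2) : ℝ :=
  (1 / (ξ 2 - ξ 0 * ux - ξ 1 * uy)) * u3 i j k
  + (1 / (ξ 2 - ξ 0 * ux - ξ 1 * uy))^2 *
      ((ξ 0 * u2 0 j + ξ 1 * u2 1 j) * u2 k i
       + (ξ 0 * u2 0 i + ξ 1 * u2 1 i) * u2 k j
       + (ξ 0 * u2 0 k + ξ 1 * u2 1 k) * u2 i j)

/-- The condition `C^ξ = α ⊙ h^ξ + β ⊙ θ`, where `θ` is a nonzero 1-form that is
null for the inverse of `h^ξ`, `α` is a 1-form and `β` is a symmetric 2-form. -/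
def condMinus (ux uy : ℝ) (u2 : Fin 2 → Fin 2 → ℝ) (u3 : Fin 2 → Fin 2 → Fin 2 → ℝ)
    (ξ : Fin 3 → ℝ) : Prop :=
  ∃ θ : Fin 2 → ℝ, θ ≠ 0 ∧
    u2 1 1 * (θ 0)^2 - 2 * u2 0 1 * θ 0 * θ 1 + u2 0 0 * (θ 1)^2 = 0 ∧
    ∃ α : Fin 2 → ℝ, ∃ β : Fin 2 → Fin 2 → ℝ, (∀ i j, β i j = β j i) ∧
      ∀ i j k : Fin 2,
        3 * cCoef ux uy u2 u3 ξ k i j =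
          (α k * hCoef ux uy u2 ξ i j + α i * hCoef ux uy u2 ξ k j
            + α j * hCoef ux uy u2 ξ k i)
          + (β i j * θ k + β i k * θ j + β j k * θ i)

/-- Pure algebraic transfer identity between two transversal fields. -/
lemma key_alg (a a' U3 Lj Li Lk Lj' Li' Lk' uki ukj uij tk tj ti ak ai aj bij bik bjk : ℝ)
    (ha : a ≠ 0) (ha' : a' ≠ 0)
    (h : 3 * ((1/a) * U3 + (1/a)^2 * (Lj * uki + Li * ukj + Lk * uij)) =
      (ak * ((1/a) * uij) + ai * ((1/a) * ukj) + aj * ((1/a) * uki))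
      + (bij * tk + bik * tj + bjk * ti)) :
    3 * ((1/a') * U3 + (1/a')^2 * (Lj' * uki + Li' * ukj + Lk' * uij)) =
      ((ak - 3 * Lk / a + 3 * Lk' / a') * ((1/a') * uij)
        + (ai - 3 * Li / a + 3 * Li' / a') * ((1/a') * ukj)
        + (aj - 3 * Lj / a + 3 * Lj' / a') * ((1/a') * uki))
      + ((a/a') * bij * tk + (a/a') * bik * tj + (a/a') * bjk * ti) := by
  have h2 : 3*(U3*a + (Lj*uki+Li*ukj+Lk*uij)) =
      (ak*uij+ai*ukj+aj*uki)*a + (bij*tk+bik*tj+bjk*ti)*a^2 := by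
    field_simp at h
    have h3 : (3*(U3*a + (Lj*uki+Li*ukj+Lk*uij))) * a^2 =
        ((ak*uij+ai*ukj+aj*uki)*a + (bij*tk+bik*tj+bjk*ti)*a^2) * a^2 := by
      linear_combination a^2 * h
    exact mul_right_cancel₀ (pow_ne_zero 2 ha) h3
  field_simp
  linear_combination a' * h2

/-- One direction of the invariance: a witness for `ξ` transfers to `ξ'`. -/
lemma condMinus_transfer (ux uy : ℝ) (u2 : Fin 2 → Fin 2 → ℝ)
    (u3 : Fin 2 → Fin 2 → Fin 2 → ℝ) (ξ ξ' : Fin 3 → ℝ)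
    (hA : ξ 2 - ξ 0 * ux - ξ 1 * uy ≠ 0)
    (hA' : ξ' 2 - ξ' 0 * ux - ξ' 1 * uy ≠ 0) :
    condMinus ux uy u2 u3 ξ → condMinus ux uy u2 u3 ξ' := by
  rintro ⟨θ, hθ, hnull, α, β, hβ, heq⟩
  refine ⟨θ, hθ, hnull,
    (fun m => α m - 3 * (ξ 0 * u2 0 m + ξ 1 * u2 1 m) / (ξ 2 - ξ 0 * ux - ξ 1 * uy)
      + 3 * (ξ' 0 * u2 0 m + ξ' 1 * u2 1 m) / (ξ' 2 - ξ' 0 * ux - ξ' 1 * uy)),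
    (fun m n => ((ξ 2 - ξ 0 * ux - ξ 1 * uy) / (ξ' 2 - ξ' 0 * ux - ξ' 1 * uy)) * β m n),
    (fun m n => by dsimp only; rw [hβ m n]), ?_⟩
  intro i j k
  exact key_alg _ _ _ _ _ _ _ _ _ _ _ _ _ _ _ _ _ _ _ _ _ hA hA' (heq i j k)

theorem stmt8 (ux uy : ℝ) (u2 : Fin 2 → Fin 2 → ℝ) (u3 : Fin 2 → Fin 2 → Fin 2 → ℝ)
    (hsym2 : ∀ i j, u2 i j = u2 j i)
    (hsym3 : ∀ i j k, u3 i j k = u3 j i k ∧ u3 i j k = u3 i k j)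
    (hneg : u2 0 0 * u2 1 1 - (u2 0 1)^2 < 0)
    (ξ ξ' : Fin 3 → ℝ)
    (hA : ξ 2 - ξ 0 * ux - ξ 1 * uy ≠ 0)
    (hA' : ξ' 2 - ξ' 0 * ux - ξ' 1 * uy ≠ 0) :
    condMinus ux uy u2 u3 ξ ↔ condMinus ux uy u2 u3 ξ' :=
  ⟨condMinus_transfer ux uy u2 u3 ξ ξ' hA hA',
   condMinus_transfer ux uy u2 u3 ξ' ξ hA' hA⟩

end
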